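/- arXiv:1309.1559 — 3 statements merged into one kernel-verified Lean document; each statement's English description precedes it below -/
import Mathlib

section
/- For every graph H, every circular-arc graph that does not contain H as a minor has treewidth at most 3·|V(H)|. -/
/-! Common definitions: chordality, (minimal) triangulations, potential maximal cliques,
minimal separators, tree decompositions and treewidth, minors and minor models,
planarity (via Wagner's characterization), circle and circular-arc graphs, grids. -/

/-- A chord of a closed walk `c` in `G`: an edge of `G` between two vertices of the walk
that is not an edge of the walk (i.e. joining two nonconsecutive vertices of a cycle). -/
def HasChord {V : Type} (G : SimpleGraph V) {v : V} (c : G.Walk v v) : Prop :=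
  ∃ u w : V, u ∈ c.support ∧ w ∈ c.support ∧ G.Adj u w ∧ s(u, w) ∉ c.edges

/-- A graph is chordal if every cycle of length at least four has a chord. -/
def Chordal {V : Type} (G : SimpleGraph V) : Prop :=
  ∀ (v : V) (c : G.Walk v v), c.IsCycle → 4 ≤ c.length → HasChord G c

/-- `H` is a triangulation of `G`: a chordal supergraph of `G` on the same vertex set. -/
def IsTriangulation {V : Type} (G H : SimpleGraph V) : Prop :=
  G ≤ H ∧ Chordal H

/-- `H` is a minimal triangulation of `G`: no proper subgraph of `H` containing `G`
is chordal. -/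
def IsMinimalTriangulation {V : Type} (G H : SimpleGraph V) : Prop :=
  IsTriangulation G H ∧ ∀ H' : SimpleGraph V, G ≤ H' → H' < H → ¬ Chordal H'

/-- A maximal clique: a clique contained in no strictly larger clique. -/
def IsMaxClique {V : Type} (G : SimpleGraph V) (S : Set V) : Prop :=
  G.IsClique S ∧ ∀ T : Set V, G.IsClique T → S ⊆ T → T = S

/-- A potential maximal clique of `G`: a maximal clique of some minimal triangulation of `G`. -/
def IsPotentialMaximalClique {V : Type} (G : SimpleGraph V) (Ω : Set V) : Prop :=
  ∃ H : SimpleGraph V, IsMinimalTriangulation G H ∧ IsMaxClique H Ω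

/-- `S` is a `u,v`-separator: `u, v ∉ S` and every walk from `u` to `v` meets `S`
(equivalently, `u` and `v` lie in different components of `G − S`). -/
def IsSeparator {V : Type} (G : SimpleGraph V) (u v : V) (S : Set V) : Prop :=
  u ∉ S ∧ v ∉ S ∧ ∀ p : G.Walk u v, ∃ x ∈ p.support, x ∈ S

/-- A minimal separator of `G`: a minimal `u,v`-separator for some nonadjacent pair `u ≠ v`. -/
def IsMinimalSeparator {V : Type} (G : SimpleGraph V) (S : Set V) : Prop :=
  ∃ u v : V, u ≠ v ∧ ¬ G.Adj u v ∧ IsSeparator G u v S ∧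
    ∀ S' : Set V, S' ⊂ S → ¬ IsSeparator G u v S'

/-- `(T, bag)` is a tree decomposition of `G`. -/
def IsTreeDecomposition {V ι : Type} (G : SimpleGraph V) (T : SimpleGraph ι)
    (bag : ι → Set V) : Prop :=
  T.IsTree ∧
  (∀ v : V, ∃ i, v ∈ bag i) ∧
  (∀ u v : V, G.Adj u v → ∃ i, u ∈ bag i ∧ v ∈ bag i) ∧
  (∀ v : V, (T.induce {i | v ∈ bag i}).Connected)

/-- `G` has a tree decomposition of width at most `k`. -/
def HasTreeDecompOfWidth {V : Type} (G : SimpleGraph V) (k : ℕ) : Prop :=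
  ∃ (ι : Type) (T : SimpleGraph ι) (bag : ι → Set V),
    IsTreeDecomposition G T bag ∧ ∀ i, (bag i).ncard ≤ k + 1

/-- The treewidth of `G`: the least width of a tree decomposition of `G`. -/
noncomputable def treewidth {V : Type} (G : SimpleGraph V) : ℕ :=
  sInf {k | HasTreeDecompOfWidth G k}

/-- `H` is a minor of `G` (branch-set formulation: nonempty pairwise disjoint connected
branch sets, with an edge of `G` between branch sets of adjacent vertices of `H`). -/
def IsMinorOf {W V : Type} (H : SimpleGraph W) (G : SimpleGraph V) : Prop :=
  ∃ B : W → Set V,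
    (∀ w, (B w).Nonempty) ∧
    (∀ w, (G.induce (B w)).Connected) ∧
    (∀ w₁ w₂ : W, w₁ ≠ w₂ → Disjoint (B w₁) (B w₂)) ∧
    (∀ w₁ w₂ : W, H.Adj w₁ w₂ → ∃ u ∈ B w₁, ∃ v ∈ B w₂, G.Adj u v)

/-- `M` is the vertex set of a minor model of `H` in `G`. -/
def IsMinorModel {W V : Type} (H : SimpleGraph W) (G : SimpleGraph V) (M : Set V) : Prop :=
  ∃ B : W → Set V,
    (∀ w, (B w).Nonempty) ∧
    (∀ w, (G.induce (B w)).Connected) ∧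
    (∀ w₁ w₂ : W, w₁ ≠ w₂ → Disjoint (B w₁) (B w₂)) ∧
    (∀ w₁ w₂ : W, H.Adj w₁ w₂ → ∃ u ∈ B w₁, ∃ v ∈ B w₂, G.Adj u v) ∧
    M = ⋃ w, B w

/-- Planarity, via Wagner's characterization: a finite simple graph is planar iff it has
neither `K₅` nor `K₃,₃` as a minor. -/
def IsPlanar {W : Type} (G : SimpleGraph W) : Prop :=
  ¬ IsMinorOf (SimpleGraph.completeGraph (Fin 5)) G ∧
  ¬ IsMinorOf (completeBipartiteGraph (Fin 3) (Fin 3)) G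

/-- A circle graph: an intersection graph of chords of the unit circle. -/
def IsCircleGraph {V : Type} (G : SimpleGraph V) : Prop :=
  ∃ a b : V → EuclideanSpace ℝ (Fin 2),
    (∀ v, a v ∈ Metric.sphere (0 : EuclideanSpace ℝ (Fin 2)) 1) ∧
    (∀ v, b v ∈ Metric.sphere (0 : EuclideanSpace ℝ (Fin 2)) 1) ∧
    (∀ v, a v ≠ b v) ∧
    ∀ v w : V, v ≠ w →
      (G.Adj v w ↔ (segment ℝ (a v) (b v) ∩ segment ℝ (a w) (b w)).Nonempty)

/-- A circular-arc graph: an intersection graph of arcs of the unit circle, an arc being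
the image of an interval `[s, t]` under the circle parametrization `θ ↦ e^{iθ}`. -/
def IsCircularArcGraph {V : Type} (G : SimpleGraph V) : Prop :=
  ∃ s t : V → ℝ,
    (∀ v, s v ≤ t v) ∧
    ∀ v w : V, v ≠ w →
      (G.Adj v w ↔
        (circleMap 0 1 '' Set.Icc (s v) (t v) ∩
          circleMap 0 1 '' Set.Icc (s w) (t w)).Nonempty)

/-- A weakly chordal graph: neither the graph nor its complement contains an induced cycle
of length at least five, i.e. every such cycle has a chord. -/
def WeaklyChordal {V : Type} (G : SimpleGraph V) : Prop :=
  (∀ (v : V) (c : G.Walk v v), c.IsCycle → 5 ≤ c.length → HasChord G c) ∧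
  (∀ (v : V) (c : Gᶜ.Walk v v), c.IsCycle → 5 ≤ c.length → HasChord Gᶜ c)

/-- The clique number of `G`: the maximum size of a clique. -/
noncomputable def cliqueNumber {V : Type} (G : SimpleGraph V) : ℕ :=
  sSup {n | ∃ S : Set V, G.IsClique S ∧ S.ncard = n}

/-- `C` is a connected component of the graph `G − Ω`. -/
def IsConnCompAvoiding {V : Type} (G : SimpleGraph V) (Ω C : Set V) : Prop :=
  C.Nonempty ∧ C ⊆ Ωᶜ ∧ (G.induce C).Connected ∧
  ∀ u v : V, u ∈ C → v ∈ Ωᶜ → G.Adj u v → v ∈ C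

/-- The `k × k` grid graph. -/
def gridGraph (k : ℕ) : SimpleGraph (Fin k × Fin k) :=
  SimpleGraph.fromRel fun p q =>
    (p.1 = q.1 ∧ p.2.val + 1 = q.2.val) ∨ (p.2 = q.2 ∧ p.1.val + 1 = q.1.val)

/-! Order the arcs by their starting angle in `[0, 2π)` and let the `i`-th bag consist of the arcs
through the base point `1` together with the arcs through the `i`-th starting point. Arcs sharing
a point form a clique, so a bag has at most `2ω` vertices; two intersecting arcs meet at the
starting point of one of them; and an arc avoiding `1` contains a contiguous run of starting
points, so this is a path decomposition of width at most `2ω - 1`. Finally a clique on `|V(H)|`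
vertices contains every graph on `V(H)` as a minor, so an `H`-minor-free graph has `ω ≤ |V(H)|`. -/

open Real SimpleGraph Set

def arc (s t : ℝ) : Set ℂ := circleMap 0 1 '' Icc s t

lemma circleMap_zero_one_eq_iff {x y : ℝ} :
    circleMap 0 1 x = circleMap 0 1 y ↔ ∃ n : ℤ, x = y + n * (2 * π) := by
  have h (θ : ℝ) : circleMap 0 1 θ = Circle.exp θ := by simp [circleMap, Circle.coe_exp]
  rw [h, h, Circle.coe_inj, Circle.exp_eq_exp]

lemma arc_add_int_mul (s t : ℝ) (n : ℤ) :
    arc (s + n * (2 * π)) (t + n * (2 * π)) = arc s t := by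
  rw [arc, ← image_add_const_Icc, image_image, arc]
  simp only [(periodic_circleMap 0 1).int_mul n _]

lemma circleMap_mem_arc {s t θ : ℝ} (h : θ ∈ Icc s t) : circleMap 0 1 θ ∈ arc s t :=
  mem_image_of_mem _ h

lemma circleMap_mem_arc_or_of_inter_nonempty {s₁ t₁ s₂ t₂ : ℝ}
    (h : (arc s₁ t₁ ∩ arc s₂ t₂).Nonempty) :
    circleMap 0 1 s₁ ∈ arc s₂ t₂ ∨ circleMap 0 1 s₂ ∈ arc s₁ t₁ := by
  obtain ⟨_, ⟨θ₁, hθ₁, rfl⟩, θ₂, hθ₂, hθ⟩ := h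
  obtain ⟨n, hn⟩ := circleMap_zero_one_eq_iff.mp hθ.symm
  have hper := periodic_circleMap 0 1
  -- the arc that reaches the common point later (measured from its start) contains the other start
  rcases le_total (θ₁ - s₁) (θ₂ - s₂) with hle | hle
  · left
    rw [← hper.sub_int_mul_eq n]
    exact circleMap_mem_arc ⟨by linarith [hθ₂.1], by linarith [hθ₂.2, hθ₁.1]⟩
  · right
    rw [← hper.int_mul n]
    exact circleMap_mem_arc ⟨by linarith [hθ₁.1], by linarith [hθ₁.2, hθ₂.1]⟩

lemma preimage_arc_inter_Ico {s t : ℝ} (hs : s ∈ Ico 0 (2 * π))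
    (h : circleMap 0 1 0 ∉ arc s t) : circleMap 0 1 ⁻¹' arc s t ∩ Ico 0 (2 * π) = Icc s t := by
  have ht : t < 2 * π := by
    by_contra! ht
    exact h ((periodic_circleMap 0 1).eq ▸ circleMap_mem_arc ⟨hs.2.le, ht⟩)
  have hsub : Icc s t ⊆ Ico 0 (2 * π) := fun θ hθ => ⟨hs.1.trans hθ.1, hθ.2.trans_lt ht⟩
  refine Subset.antisymm ?_ fun θ hθ => ⟨circleMap_mem_arc hθ, hsub hθ⟩
  rintro x ⟨⟨θ, hθ, hx⟩, hxI⟩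
  have hinj := injOn_circleMap_of_abs_sub_le' (c := 0) one_ne_zero (a := 0) (b := 2 * π) (by simp)
  rwa [← hinj (hsub hθ) hxI hx]

lemma pathGraph_isAcyclic (n : ℕ) : (pathGraph n).IsAcyclic := by
  refine isAcyclic_iff_forall_adj_isBridge.mpr fun u v huv => ?_
  wlog h : u.val + 1 = v.val generalizing u v
  · rw [Sym2.eq_swap]
    exact this v u huv.symm ((pathGraph_adj.mp huv).resolve_left h)
  rintro ⟨p⟩
  -- a walk from `u` to `v = u + 1` must cross from `Iic u` to its complement, and only `s(u, v)`
  -- does that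
  obtain ⟨d, -, hd₁, hd₂⟩ := p.exists_boundary_dart (Iic u) (mem_Iic.mpr le_rfl)
    (by simp only [mem_Iic, Fin.le_def, not_le]; omega)
  obtain ⟨hadj, hne⟩ := deleteEdges_adj.mp d.adj
  rw [pathGraph_adj] at hadj
  simp only [mem_Iic, Fin.le_def, not_le] at hd₁ hd₂
  have hfst : d.fst = u := Fin.ext (by omega)
  have hsnd : d.snd = v := Fin.ext (by omega)
  exact hne (by simp [hfst, hsnd])

lemma pathGraph_isTree {n : ℕ} (hn : n ≠ 0) : (pathGraph n).IsTree := by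
  obtain ⟨m, rfl⟩ := Nat.exists_eq_succ_of_ne_zero hn
  exact ⟨pathGraph_connected m, pathGraph_isAcyclic _⟩

lemma connected_induce_pathGraph {n : ℕ} {S : Set (Fin n)} (hS : S.OrdConnected)
    (hne : S.Nonempty) : ((pathGraph n).induce S).Connected := by
  have : Nonempty S := hne.to_subtype
  have hreach : ∀ (m : ℕ) (a b : S), a ≤ b → b.1.val = a.1.val + m →
      ((pathGraph n).induce S).Reachable a b := by
    intro m
    induction m with
    | zero => intro a b _ h; rw [Subtype.ext (Fin.ext h)]
    | succ m ih =>
      intro a b hab h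
      let c : Fin n := ⟨b.1.val - 1, by omega⟩
      have hc : c ∈ S :=
        hS.out a.2 b.2 ⟨Fin.le_def.mpr (by simp [c]; omega), Fin.le_def.mpr (by simp [c])⟩
      refine (ih a ⟨c, hc⟩ (Fin.le_def.mpr (by simp [c]; omega)) (by simp [c]; omega)).trans ?_
      exact Adj.reachable (by simp [pathGraph_adj, c]; omega)
  refine ⟨fun a b => ?_⟩
  rcases le_total a b with hab | hba
  · exact hreach _ a b hab (by rw [Nat.add_sub_cancel' hab])
  · exact (hreach _ b a hba (by rw [Nat.add_sub_cancel' hba])).symm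

lemma isTreeDecomposition_pathGraph {V : Type} {G : SimpleGraph V} {n : ℕ} (hn : n ≠ 0)
    (bag : Fin n → Set V) (hcover : ∀ v, ∃ i, v ∈ bag i)
    (hedge : ∀ u v, G.Adj u v → ∃ i, u ∈ bag i ∧ v ∈ bag i)
    (hconv : ∀ v, {i | v ∈ bag i}.OrdConnected) :
    IsTreeDecomposition G (pathGraph n) bag :=
  ⟨pathGraph_isTree hn, hcover, hedge,
    fun v => connected_induce_pathGraph (hconv v) (hcover v)⟩

lemma hasTreeDecompOfWidth_of_isEmpty {V : Type} [IsEmpty V] (G : SimpleGraph V) (k : ℕ) :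
    HasTreeDecompOfWidth G k :=
  ⟨Unit, ⊥, fun _ => ∅, ⟨IsTree.of_subsingleton, isEmptyElim, isEmptyElim, isEmptyElim⟩,
    fun _ => by simp⟩

lemma isMinorOf_of_isClique {W V : Type} [Fintype W] [Finite V] (H : SimpleGraph W)
    {G : SimpleGraph V} {S : Set V} (hS : G.IsClique S) (hcard : Fintype.card W ≤ S.ncard) :
    IsMinorOf H G := by
  have : Fintype S := Fintype.ofFinite S
  rw [← Nat.card_coe_set_eq, Nat.card_eq_fintype_card] at hcard
  obtain ⟨f⟩ := Function.Embedding.nonempty_of_card_le hcard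
  refine ⟨fun w => {(f w : V)}, fun w => singleton_nonempty _, fun w => ?_, fun w₁ w₂ hne => ?_,
    fun w₁ w₂ hadj => ⟨f w₁, rfl, f w₂, rfl, hS (f w₁).2 (f w₂).2 ?_⟩⟩
  · rw [induce_singleton_eq_top]
    exact connected_top
  · exact disjoint_singleton.mpr (Subtype.coe_injective.ne (f.injective.ne hne))
  · exact Subtype.coe_injective.ne (f.injective.ne hadj.ne)

lemma exists_equiv_fin_monotone {V α : Type} [Fintype V] [LinearOrder α] (f : V → α) :
    ∃ E : Fin (Fintype.card V) ≃ V, Monotone (f ∘ E) :=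
  let e := (Fintype.equivFin V).symm
  ⟨(Tuple.sort (f ∘ e)).trans e, Tuple.monotone_sort (f ∘ e)⟩

def IsArcModel {V : Type} (G : SimpleGraph V) (s t : V → ℝ) : Prop :=
  (∀ v, s v ≤ t v) ∧
    ∀ v w, v ≠ w → (G.Adj v w ↔ (arc (s v) (t v) ∩ arc (s w) (t w)).Nonempty)

namespace IsArcModel

variable {V : Type} {G : SimpleGraph V} {s t : V → ℝ}

lemma isClique_setOf_mem_arc (hM : IsArcModel G s t) (z : ℂ) :
    G.IsClique {v | z ∈ arc (s v) (t v)} :=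
  fun a ha b hb hab => (hM.2 a b hab).mpr ⟨z, ha, hb⟩

lemma add_int_mul (hM : IsArcModel G s t) (n : V → ℤ) :
    IsArcModel G (fun v => s v + n v * (2 * π)) (fun v => t v + n v * (2 * π)) := by
  refine ⟨fun v => by simpa using hM.1 v, fun v w hvw => ?_⟩
  simp only [arc_add_int_mul]
  exact hM.2 v w hvw

lemma exists_start_mem_Ico (hM : IsArcModel G s t) :
    ∃ s' t' : V → ℝ, IsArcModel G s' t' ∧ ∀ v, s' v ∈ Ico 0 (2 * π) := by
  refine ⟨_, _, hM.add_int_mul fun v => -toIcoDiv two_pi_pos 0 (s v), fun v => ?_⟩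
  convert toIcoMod_mem_Ico' two_pi_pos (s v) using 1
  push_cast
  linarith [toIcoMod_sub_self_eq_mul two_pi_pos 0 (s v)]

lemma hasTreeDecompOfWidth [Fintype V] (hM : IsArcModel G s t) (hs : ∀ v, s v ∈ Ico 0 (2 * π))
    {k : ℕ} (hk : ∀ S, G.IsClique S → S.ncard ≤ k) : HasTreeDecompOfWidth G (2 * k - 1) := by
  cases isEmpty_or_nonempty V with
  | inl _ => exact hasTreeDecompOfWidth_of_isEmpty G _
  | inr hV =>
  obtain ⟨E, hE⟩ := exists_equiv_fin_monotone s
  let bag : Fin (Fintype.card V) → Set V := fun i =>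
    {v | circleMap 0 1 0 ∈ arc (s v) (t v)} ∪ {v | circleMap 0 1 (s (E i)) ∈ arc (s v) (t v)}
  have hself (v : V) : v ∈ bag (E.symm v) :=
    Or.inr (by simpa using circleMap_mem_arc ⟨le_rfl, hM.1 v⟩)
  refine ⟨_, _, bag, isTreeDecomposition_pathGraph Fintype.card_ne_zero bag
    (fun v => ⟨_, hself v⟩) ?edge ?interval, fun i => ?size⟩
  case edge =>
    intro u v huv
    rcases circleMap_mem_arc_or_of_inter_nonempty ((hM.2 u v huv.ne).mp huv) with h | h
    · exact ⟨E.symm u, hself u, Or.inr (by simpa using h)⟩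
    · exact ⟨E.symm v, Or.inr (by simpa using h), hself v⟩
  case interval =>
    intro v
    by_cases h0 : circleMap 0 1 0 ∈ arc (s v) (t v)
    · convert ordConnected_univ
      ext i
      simp [bag, h0]
    · have : {i | v ∈ bag i} = (s ∘ E) ⁻¹' Icc (s v) (t v) := by
        ext i
        simp [bag, h0, ← preimage_arc_inter_Ico (hs v) h0, hs (E i)]
      rw [this]
      exact ordConnected_Icc.preimage_mono hE
  case size =>
    have hk₁ : 1 ≤ k := by simpa using hk _ (isClique_singleton hV.some)
    calc (bag i).ncard ≤ _ + _ := ncard_union_le _ _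
      _ ≤ k + k := add_le_add (hk _ (hM.isClique_setOf_mem_arc _))
          (hk _ (hM.isClique_setOf_mem_arc _))
      _ = 2 * k - 1 + 1 := by omega

end IsArcModel

lemma IsCircularArcGraph.hasTreeDecompOfWidth {V : Type} [Fintype V] {G : SimpleGraph V}
    (hG : IsCircularArcGraph G) {k : ℕ} (hk : ∀ S, G.IsClique S → S.ncard ≤ k) :
    HasTreeDecompOfWidth G (2 * k - 1) := by
  obtain ⟨s, t, hM⟩ : ∃ s t, IsArcModel G s t := hG
  obtain ⟨s', t', hM', hs'⟩ := hM.exists_start_mem_Ico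
  exact hM'.hasTreeDecompOfWidth hs' hk

/-- Every circular-arc graph with no `H`-minor has treewidth at most `3·|V(H)|`. -/
theorem stmt_10 {W : Type} [Fintype W] (H : SimpleGraph W) {V : Type} [Fintype V]
    (G : SimpleGraph V) (hG : IsCircularArcGraph G) (hH : ¬ IsMinorOf H G) :
    treewidth G ≤ 3 * Fintype.card W := by
  have hclique : ∀ S, G.IsClique S → S.ncard ≤ Fintype.card W := fun S hS =>
    (lt_of_not_ge fun h => hH (isMinorOf_of_isClique H hS h)).le
  calc treewidth G ≤ 2 * Fintype.card W - 1 := Nat.sInf_le (hG.hasTreeDecompOfWidth hclique)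
    _ ≤ 3 * Fintype.card W := by omega
end

section
/- Let G be a chordal graph, let S be a minimal separator of G, and let T be a clique tree of G. Then there is an edge e of T such that S equals the intersection of the two maximal cliques of G corresponding to the endpoints of e. -/
/-!
Let `S` be a minimal `u,v`-separator and `Cu`, `Cv` the components of `G - S` containing `u`
and `v`; by minimality every vertex of `S` has a neighbour in each of them. As the bags are
cliques, no bag meets both `Cu` and `Cv`, so the subtrees `P`, `Q` formed by the bags meeting
`Cu`, resp. `Cv`, are disjoint, and a tree edge `ab` on a path from `P` to `Q` separates them.
For `s ∈ S` the subtree of bags containing `s` meets `P` (at a bag holding `s` and a neighbour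
in `Cu`) as well as `Q`, hence crosses `ab`: `s ∈ bag a ∩ bag b`. Conversely a vertex of
`bag a ∩ bag b` outside `S` would lie in `Cu`, because the clique `bag a` meets `Cu`, and would
then put `b` into `P`.
-/

open SimpleGraph

namespace SimpleGraph

variable {V ι : Type*} {G : SimpleGraph V} {T : SimpleGraph ι}

theorem preconnected_induce_iff_exists_walk {s : Set V} :
    (G.induce s).Preconnected ↔
      ∀ x ∈ s, ∀ y ∈ s, ∃ p : G.Walk x y, ∀ z ∈ p.support, z ∈ s := by
  constructor
  · intro h x hx y hy
    obtain ⟨w⟩ := h ⟨x, hx⟩ ⟨y, hy⟩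
    have hw : ∀ z ∈ (w.map (Embedding.induce s).toHom).support, z ∈ s := by
      intro z hz
      rw [Walk.support_map, List.mem_map] at hz
      obtain ⟨⟨z, hz⟩, -, rfl⟩ := hz
      exact hz
    exact ⟨_, hw⟩
  · rintro h ⟨x, hx⟩ ⟨y, hy⟩
    obtain ⟨p, hp⟩ := h x hx y hy
    exact ⟨p.induce s hp⟩

theorem Walk.IsPath.exists_adj_mem_notMem_reachable {P : Set ι} {x y : ι} {p : T.Walk x y}
    (hp : p.IsPath) (hx : x ∈ P) (hy : y ∉ P) :
    ∃ a b, T.Adj a b ∧ a ∈ P ∧ b ∉ P ∧ (T.deleteEdges {s(a, b)}).Reachable b y := by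
  induction p with
  | nil => exact absurd hx hy
  | @cons x z y hxz q ih =>
    rw [Walk.cons_isPath_iff] at hp
    by_cases hz : z ∈ P
    · exact ih hp.1 hz hy
    · exact ⟨x, z, hxz, hx, hz,
        ⟨q.toDeleteEdge _ fun he => hp.2 (q.fst_mem_support_of_mem_edges he)⟩⟩

theorem Connected.exists_adj_separating (hT : T.Connected) {P Q : Set ι}
    (hP : (T.induce P).Preconnected) (hQ : (T.induce Q).Preconnected) (hPQ : Disjoint P Q)
    {i j : ι} (hi : i ∈ P) (hj : j ∈ Q) :
    ∃ a b, T.Adj a b ∧ a ∈ P ∧ b ∉ P ∧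
      (∀ k ∈ P, (T.deleteEdges {s(a, b)}).Reachable k a) ∧
      ∀ k ∈ Q, (T.deleteEdges {s(a, b)}).Reachable k b := by
  classical
  obtain ⟨p⟩ := hT.preconnected i j
  obtain ⟨a, b, hab, ha, hb, hbj⟩ :=
    p.toPath.2.exists_adj_mem_notMem_reachable hi (hPQ.notMem_of_mem_right hj)
  refine ⟨a, b, hab, ha, hb, fun k hk => ?_, fun k hk => ?_⟩
  · obtain ⟨q, hq⟩ := preconnected_induce_iff_exists_walk.mp hP k hk a ha
    exact ⟨q.toDeleteEdge _ fun he => hb (hq b (q.snd_mem_support_of_mem_edges he))⟩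
  · obtain ⟨q, hq⟩ := preconnected_induce_iff_exists_walk.mp hQ k hk j hj
    have hkj : (T.deleteEdges {s(a, b)}).Reachable k j :=
      ⟨q.toDeleteEdge _ fun he =>
        hPQ.notMem_of_mem_left ha (hq a (q.fst_mem_support_of_mem_edges he))⟩
    exact hkj.trans hbj.symm

theorem IsBridge.mem_of_induce_preconnected {a b : ι} (hab : T.IsBridge s(a, b)) {R : Set ι}
    (hR : (T.induce R).Preconnected) {i j : ι} (hi : i ∈ R) (hj : j ∈ R)
    (hia : (T.deleteEdges {s(a, b)}).Reachable i a)
    (hjb : (T.deleteEdges {s(a, b)}).Reachable j b) : a ∈ R ∧ b ∈ R := by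
  obtain ⟨q, hq⟩ := preconnected_induce_iff_exists_walk.mp hR i hi j hj
  by_cases he : s(a, b) ∈ q.edges
  · exact ⟨hq a (q.fst_mem_support_of_mem_edges he), hq b (q.snd_mem_support_of_mem_edges he)⟩
  · have hij : (T.deleteEdges {s(a, b)}).Reachable i j := ⟨q.toDeleteEdge _ he⟩
    exact absurd ((hia.symm.trans hij).trans hjb) (isBridge_iff.mp hab)

/-- The vertices reachable from `u` in `G - S` (empty if `u ∈ S`). -/
def avoidingComponent (G : SimpleGraph V) (S : Set V) (u : V) : Set V :=
  {x | ∃ p : G.Walk u x, ∀ y ∈ p.support, y ∉ S}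

section avoidingComponent

variable {S : Set V} {u x y : V}

theorem mem_avoidingComponent_self (hu : u ∉ S) : u ∈ G.avoidingComponent S u :=
  ⟨.nil, by simpa using hu⟩

theorem avoidingComponent_subset_compl : G.avoidingComponent S u ⊆ Sᶜ :=
  fun x ⟨p, hp⟩ => hp x p.end_mem_support

theorem mem_avoidingComponent_of_mem_support {p : G.Walk u x} (hp : ∀ y ∈ p.support, y ∉ S)
    (hy : y ∈ p.support) : y ∈ G.avoidingComponent S u := by
  classical
  exact ⟨p.takeUntil y hy, fun z hz => hp z (p.support_takeUntil_subset_support hy hz)⟩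

theorem mem_avoidingComponent_of_adj (hx : x ∈ G.avoidingComponent S u) (hxy : G.Adj x y)
    (hy : y ∉ S) : y ∈ G.avoidingComponent S u := by
  obtain ⟨p, hp⟩ := hx
  refine ⟨p.concat hxy, fun z hz => ?_⟩
  rw [Walk.support_concat, List.mem_append, List.mem_singleton] at hz
  rcases hz with hz | rfl
  exacts [hp z hz, hy]

theorem preconnected_induce_avoidingComponent :
    (G.induce (G.avoidingComponent S u)).Preconnected := by
  refine preconnected_induce_iff_exists_walk.mpr ?_
  rintro x ⟨p, hp⟩ y ⟨q, hq⟩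
  refine ⟨p.reverse.append q, fun z hz => ?_⟩
  rw [Walk.mem_support_append_iff, Walk.support_reverse, List.mem_reverse] at hz
  rcases hz with hz | hz
  exacts [mem_avoidingComponent_of_mem_support hp hz, mem_avoidingComponent_of_mem_support hq hz]

theorem IsClique.subset_avoidingComponent_union {K : Set V} (hK : G.IsClique K) (hxK : x ∈ K)
    (hx : x ∈ G.avoidingComponent S u) : K ⊆ G.avoidingComponent S u ∪ S := by
  intro z hz
  by_cases hzS : z ∈ S
  · exact Or.inr hzS
  by_cases hzx : z = x
  · exact Or.inl (hzx ▸ hx)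
  exact Or.inl (mem_avoidingComponent_of_adj hx (hK hxK hz (Ne.symm hzx)) hzS)

end avoidingComponent

end SimpleGraph

section Separator

variable {V : Type} {G : SimpleGraph V} {S : Set V} {u v : V}

theorem IsSeparator.symm (h : IsSeparator G u v S) : IsSeparator G v u S := by
  refine ⟨h.2.1, h.1, fun p => ?_⟩
  obtain ⟨x, hx, hxS⟩ := h.2.2 p.reverse
  exact ⟨x, by simpa using hx, hxS⟩

theorem IsSeparator.notMem_avoidingComponent (h : IsSeparator G u v S) :
    v ∉ G.avoidingComponent S u := fun ⟨p, hp⟩ =>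
  let ⟨x, hx, hxS⟩ := h.2.2 p
  hp x hx hxS

theorem IsSeparator.disjoint_avoidingComponent (h : IsSeparator G u v S) :
    Disjoint (G.avoidingComponent S u) (G.avoidingComponent S v) := by
  refine Set.disjoint_left.mpr fun x hxu ⟨q, hq⟩ => h.notMem_avoidingComponent ?_
  obtain ⟨p, hp⟩ := hxu
  refine ⟨p.append q.reverse, fun z hz => ?_⟩
  rw [Walk.mem_support_append_iff, Walk.support_reverse, List.mem_reverse] at hz
  rcases hz with hz | hz
  exacts [hp z hz, hq z hz]

theorem IsSeparator.exists_adj_avoidingComponent (h : IsSeparator G u v S)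
    (hmin : ∀ S' : Set V, S' ⊂ S → ¬ IsSeparator G u v S') {s : V} (hs : s ∈ S) :
    ∃ x ∈ G.avoidingComponent S u, G.Adj x s := by
  obtain ⟨p, hp⟩ : ∃ p : G.Walk u v, ∀ x ∈ p.support, x ∉ S \ {s} := by
    by_contra! hcon
    exact hmin _ (Set.sdiff_singleton_ssubset.mpr hs)
      ⟨fun hu => h.1 hu.1, fun hv => h.2.1 hv.1, hcon⟩
  obtain ⟨d, hd, hd₁, hd₂⟩ := p.exists_boundary_dart _ (mem_avoidingComponent_self h.1)
    h.notMem_avoidingComponent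
  have hd₂S : d.snd ∈ S := by
    by_contra hd₂S
    exact hd₂ (mem_avoidingComponent_of_adj hd₁ d.adj hd₂S)
  have hd₂s : d.snd = s := by
    by_contra hne
    exact hp _ (p.dart_snd_mem_support_of_mem_darts hd) ⟨hd₂S, hne⟩
  exact ⟨d.fst, hd₁, hd₂s ▸ d.adj⟩

end Separator

section TreeDecomposition

variable {V ι : Type} {G : SimpleGraph V} {T : SimpleGraph ι} {bag : ι → Set V}

theorem IsTreeDecomposition.exists_walk_bags_inter_nonempty (hT : IsTreeDecomposition G T bag)
    {C : Set V} {x y : V} (w : G.Walk x y) (hw : ∀ z ∈ w.support, z ∈ C) {i j : ι}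
    (hi : x ∈ bag i) (hj : y ∈ bag j) :
    ∃ q : T.Walk i j, ∀ k ∈ q.support, (bag k ∩ C).Nonempty := by
  induction w generalizing i with
  | nil =>
    obtain ⟨q, hq⟩ := preconnected_induce_iff_exists_walk.mp (hT.2.2.2 _).preconnected i hi j hj
    exact ⟨q, fun k hk => ⟨_, hq k hk, hw _ (List.mem_singleton_self _)⟩⟩
  | @cons x z y hxz w ih =>
    obtain ⟨k, hxk, hzk⟩ := hT.2.2.1 x z hxz
    obtain ⟨q₁, hq₁⟩ :=
      preconnected_induce_iff_exists_walk.mp (hT.2.2.2 x).preconnected i hi k hxk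
    obtain ⟨q₂, hq₂⟩ := ih (fun z hz => hw z (List.mem_cons_of_mem _ hz)) hzk hj
    refine ⟨q₁.append q₂, fun m hm => ?_⟩
    rcases (Walk.mem_support_append_iff _ _).mp hm with hm | hm
    exacts [⟨x, hq₁ m hm, hw x (Walk.start_mem_support _)⟩, hq₂ m hm]

theorem IsTreeDecomposition.preconnected_induce_bags_inter_nonempty
    (hT : IsTreeDecomposition G T bag) {C : Set V} (hC : (G.induce C).Preconnected) :
    (T.induce {i | (bag i ∩ C).Nonempty}).Preconnected := by
  refine preconnected_induce_iff_exists_walk.mpr ?_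
  rintro i ⟨x, hxi, hx⟩ j ⟨y, hyj, hy⟩
  obtain ⟨w, hw⟩ := preconnected_induce_iff_exists_walk.mp hC x hx y hy
  exact hT.exists_walk_bags_inter_nonempty w hw hxi hyj

end TreeDecomposition

theorem stmt_15_general {V ι : Type} (G : SimpleGraph V)
    (S : Set V) (hS : IsMinimalSeparator G S)
    (T : SimpleGraph ι) (bag : ι → Set V)
    (hT : IsTreeDecomposition G T bag)
    (hmax : ∀ i, IsMaxClique G (bag i)) :
    ∃ i j, T.Adj i j ∧ S = bag i ∩ bag j := by
  obtain ⟨u, v, -, -, hsep, hmin⟩ := hS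
  set Cu := G.avoidingComponent S u
  set Cv := G.avoidingComponent S v
  have hPQ : Disjoint {i | (bag i ∩ Cu).Nonempty} {i | (bag i ∩ Cv).Nonempty} := by
    refine Set.disjoint_left.mpr fun i ⟨x, hxi, hx⟩ ⟨y, hyi, hy⟩ => ?_
    have hyS : y ∉ S := avoidingComponent_subset_compl hy
    have hyu := ((hmax i).1.subset_avoidingComponent_union hxi hx hyi).resolve_right hyS
    exact hsep.disjoint_avoidingComponent.notMem_of_mem_left hyu hy
  obtain ⟨i₀, hi₀⟩ := hT.2.1 u
  obtain ⟨j₀, hj₀⟩ := hT.2.1 v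
  have hu : u ∈ Cu := mem_avoidingComponent_self hsep.1
  have hv : v ∈ Cv := mem_avoidingComponent_self hsep.2.1
  obtain ⟨a, b, hab, ⟨x, hxa, hx⟩, hb, hPa, hQb⟩ := hT.1.connected.exists_adj_separating
    (hT.preconnected_induce_bags_inter_nonempty preconnected_induce_avoidingComponent)
    (hT.preconnected_induce_bags_inter_nonempty preconnected_induce_avoidingComponent) hPQ
    ⟨u, hi₀, hu⟩ ⟨v, hj₀, hv⟩
  have hbridge := isAcyclic_iff_forall_adj_isBridge.mp hT.1.isAcyclic hab
  refine ⟨a, b, hab, subset_antisymm (fun s hs => ?_) fun z ⟨hza, hzb⟩ => ?_⟩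
  · obtain ⟨y, hy, hys⟩ := hsep.exists_adj_avoidingComponent hmin hs
    obtain ⟨y', hy', hy's⟩ :=
      hsep.symm.exists_adj_avoidingComponent (fun S' h h' => hmin S' h h'.symm) hs
    obtain ⟨i, hyi, hsi⟩ := hT.2.2.1 y s hys
    obtain ⟨j, hy'j, hsj⟩ := hT.2.2.1 y' s hy's
    exact hbridge.mem_of_induce_preconnected (hT.2.2.2 s).preconnected hsi hsj
      (hPa i ⟨y, hyi, hy⟩) (hQb j ⟨y', hy'j, hy'⟩)
  · by_contra hzS
    have hz := ((hmax a).1.subset_avoidingComponent_union hxa hx hza).resolve_right hzS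
    exact hb ⟨z, hzb, hz⟩

/-- In a clique tree of a chordal graph, every minimal separator is the intersection of the
two maximal cliques at the endpoints of some edge of the tree. -/
theorem stmt_15 {V ι : Type} [Fintype V] (G : SimpleGraph V) (hG : Chordal G)
    (S : Set V) (hS : IsMinimalSeparator G S)
    (T : SimpleGraph ι) (bag : ι → Set V)
    (hT : IsTreeDecomposition G T bag)
    (hmax : ∀ i, IsMaxClique G (bag i))
    (hsurj : ∀ K : Set V, IsMaxClique G K → ∃ i, bag i = K) :
    ∃ i j, T.Adj i j ∧ S = bag i ∩ bag j :=
  stmt_15_general G S hS T bag hT hmax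
end

section
/- For every chordal graph G with at least one vertex, the treewidth of G equals ω(G) − 1, where ω(G) is the maximum size of a clique in G. -/
/-!
Every clique of `G` lies in a single bag of any tree decomposition, because the subtrees
`{i | v ∈ bag i}` of its vertices pairwise meet and subtrees of a tree have the Helly property;
hence `ω(G) ≤ tw(G) + 1` for every finite graph.

Conversely, let `G` be chordal and `a, b` non-adjacent. Let `A` be the component of `a` in
`G − N[b]` and `S` the set of neighbours of `b` adjacent to `A`. Two non-adjacent `x, y ∈ S` would
close, through `b` and a shortest `x`–`y` path across `A`, a chordless cycle of length at least
four; so `S` is a clique separating `A` from `b`. By induction `G[A ∪ S]` and `G[V ∖ A]` have tree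
decompositions whose bags are cliques, and joining the two trees by an edge between bags
containing `S` gives such a decomposition of `G`, so `tw(G) ≤ ω(G) − 1`.
-/

open Set SimpleGraph

namespace SimpleGraph

variable {V W ι ι₁ ι₂ κ : Type*}

section Walks

variable {G : SimpleGraph V} {u v x y : V}

theorem Walk.length_dropUntil_lt [DecidableEq V] (p : G.Walk u v) (h : x ∈ p.support) (hx : x ≠ u) :
    (p.dropUntil x h).length < p.length := by
  have hsplit := congrArg Walk.length (p.take_spec h)
  have htake : (p.takeUntil x h).length ≠ 0 := fun h0 => hx (Walk.eq_of_length_eq_zero h0).symm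
  rw [Walk.length_append] at hsplit
  omega

theorem Walk.exists_length_lt_of_chord (p : G.Walk u v) (hx : x ∈ p.support)
    (hy : y ∈ p.support) (hxy : G.Adj x y) (he : s(x, y) ∉ p.edges) :
    ∃ q : G.Walk u v, (∀ z ∈ q.support, z ∈ p.support) ∧ q.length < p.length := by
  classical
  induction p with
  | nil =>
    rw [Walk.mem_support_nil_iff] at hx hy
    exact absurd (hx ▸ hy ▸ hxy) (G.irrefl)
  | @cons u c v huc r ih =>
    rw [Walk.support_cons, List.mem_cons] at hx hy
    rw [Walk.edges_cons, List.mem_cons, not_or] at he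
    have shortcut : ∀ w (hw : w ∈ r.support), w ≠ c → G.Adj u w →
        ∃ q : G.Walk u v, (∀ z ∈ q.support, z ∈ (Walk.cons huc r).support) ∧
          q.length < (Walk.cons huc r).length := fun w hw hwc huw =>
      ⟨Walk.cons huw (r.dropUntil w hw), by
        simp only [Walk.support_cons, List.mem_cons]
        exact fun z hz => hz.imp_right (r.support_dropUntil_subset_support hw ·), by
        simpa using r.length_dropUntil_lt hw hwc⟩
    by_cases hxr : x ∈ r.support <;> by_cases hyr : y ∈ r.support
    · obtain ⟨q, hq, hlt⟩ := ih hxr hyr he.2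
      refine ⟨Walk.cons huc q, ?_, by simpa using hlt⟩
      simp only [Walk.support_cons, List.mem_cons]
      exact fun z hz => hz.imp_right (hq z)
    · obtain rfl : y = u := hy.resolve_right hyr
      exact shortcut x hxr (by rintro rfl; exact he.1 (Sym2.eq_swap)) hxy.symm
    · obtain rfl : x = u := hx.resolve_right hxr
      exact shortcut y hyr (by rintro rfl; exact he.1 rfl) hxy
    · obtain rfl := hx.resolve_right hxr
      obtain rfl := hy.resolve_right hyr
      exact absurd hxy (G.irrefl)

/-- A shortest walk inside `P` is a chordless path. -/
theorem exists_isPath_isChordless_of_walk {P : Set V} (p : G.Walk x y)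
    (hp : ∀ z ∈ p.support, z ∈ P) :
    ∃ q : G.Walk x y, q.IsPath ∧ q.IsChordless ∧ ∀ z ∈ q.support, z ∈ P := by
  classical
  have hex : ∃ n, ∃ q : G.Walk x y, (∀ z ∈ q.support, z ∈ P) ∧ q.length = n :=
    ⟨_, p, hp, rfl⟩
  obtain ⟨q, hqP, hqlen⟩ := Nat.find_spec hex
  have hmin : ∀ r : G.Walk x y, (∀ z ∈ r.support, z ∈ P) → q.length ≤ r.length :=
    fun r hr => hqlen ▸ Nat.find_min' hex ⟨r, hr, rfl⟩
  have hbypass : ∀ z ∈ q.bypass.support, z ∈ P :=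
    fun z hz => hqP z (q.support_bypass_subset_support hz)
  refine ⟨q.bypass, q.bypass_isPath, ?_, hbypass⟩
  rw [Walk.isChordless_iff_forall_mem_edges]
  intro u w hu hw huw
  by_contra he
  obtain ⟨r, hr, hlt⟩ := q.bypass.exists_length_lt_of_chord hu hw huw he
  have := hmin r fun z hz => hbypass z (hr z hz)
  have := q.length_bypass_le_length
  omega

end Walks

section Trees

theorem Connected.induce_image {G : SimpleGraph V} {G' : SimpleGraph W} (f : G →g G')
    {s : Set V} (h : (G.induce s).Connected) : (G'.induce (f '' s)).Connected :=
  h.map (induceHom f (mapsTo_image f s)) <| by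
    rintro ⟨_, x, hx, rfl⟩
    exact ⟨⟨x, hx⟩, rfl⟩

theorem Connected.exists_walk_of_induce {G : SimpleGraph V} {s : Set V}
    (h : (G.induce s).Connected) {x y : V} (hx : x ∈ s) (hy : y ∈ s) :
    ∃ p : G.Walk x y, ∀ z ∈ p.support, z ∈ s := by
  obtain ⟨p⟩ := h.preconnected ⟨x, hx⟩ ⟨y, hy⟩
  refine ⟨p.map (Embedding.induce s).toHom, fun z hz => ?_⟩
  change z ∈ (p.map (Embedding.induce s).toHom).support at hz
  rw [Walk.support_map, List.mem_map] at hz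
  obtain ⟨z, -, rfl⟩ := hz
  exact z.2

theorem IsAcyclic.mem_edges_of_adj {G : SimpleGraph V} (hG : G.IsAcyclic) {u v : V}
    (h : G.Adj u v) (p : G.Walk u v) : s(u, v) ∈ p.edges :=
  isBridge_iff_forall_walk_mem_edges.mp (isAcyclic_iff_forall_adj_isBridge.mp hG h) p

theorem IsTree.sum_sup_edge [Finite ι₁] [Finite ι₂] {T₁ : SimpleGraph ι₁}
    {T₂ : SimpleGraph ι₂} (h₁ : T₁.IsTree) (h₂ : T₂.IsTree) (i₁ : ι₁) (i₂ : ι₂) :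
    ((T₁ ⊕g T₂) ⊔ edge (Sum.inl i₁) (Sum.inr i₂)).IsTree := by
  rw [isTree_iff_connected_and_card] at *
  refine ⟨h₁.1.sum_sup_edge h₂.1, ?_⟩
  have hdisj : Disjoint (T₁ ⊕g T₂).edgeSet (edge (Sum.inl i₁) (Sum.inr i₂)).edgeSet := by
    rw [edgeSet_edge_of_ne Sum.inl_ne_inr, Set.disjoint_singleton_right]
    exact not_adj_sum_inl_inr (G := T₁) (H := T₂) i₁ i₂
  rw [edgeSet_sup, Nat.card_coe_set_eq, Set.ncard_union_eq hdisj, ← Nat.card_coe_set_eq,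
    Nat.card_congr edgeSetSumEquiv, Nat.card_sum, edgeSet_edge_of_ne Sum.inl_ne_inr,
    Set.ncard_singleton, Nat.card_sum]
  omega

/-- Helly property of subtrees. -/
theorem IsTree.exists_forall_mem_of_pairwise_inter_nonempty {T : SimpleGraph ι}
    (hT : T.IsTree) (S : Finset κ) (X : κ → Set ι)
    (hconn : ∀ k ∈ S, (T.induce (X k)).Connected)
    (hpair : ∀ k ∈ S, ∀ l ∈ S, (X k ∩ X l).Nonempty) :
    ∃ i, ∀ k ∈ S, i ∈ X k := by
  classical
  induction S using Finset.induction_on with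
  | empty =>
    obtain ⟨i⟩ := hT.connected.nonempty
    exact ⟨i, by simp⟩
  | @insert a S haS ih =>
    simp only [Finset.mem_insert, forall_eq_or_imp] at hconn hpair ⊢
    obtain ⟨i₀, hi₀⟩ := ih hconn.2 fun k hk l hl => (hpair.2 k hk).2 l hl
    obtain ⟨j₀, hj₀, -⟩ := hpair.1.1
    -- a shortest walk from the common part of `S` to `X a`
    have hex : ∃ n, ∃ i j, ∃ p : T.Walk i j, (∀ k ∈ S, i ∈ X k) ∧ j ∈ X a ∧ p.length = n :=
      ⟨_, i₀, j₀, (hT.connected.preconnected i₀ j₀).some, hi₀, hj₀, rfl⟩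
    obtain ⟨i, j, p, hi, hj, hlen⟩ := Nat.find_spec hex
    have hmin := fun m (hm : m < Nat.find hex) => Nat.find_min hex hm
    cases p with
    | nil => exact ⟨i, hj, hi⟩
    | @cons _ c _ hic q =>
      rw [Walk.length_cons] at hlen
      have hia : i ∉ X a := fun h => hmin 0 (by omega) ⟨i, i, .nil, hi, h, rfl⟩
      have hiq : i ∉ q.support := fun h => hmin (q.dropUntil i h).length
        (by have := q.length_dropUntil_le_length h; omega) ⟨i, j, _, hi, hj, rfl⟩
      -- the edge `ic` lies on every walk from `i` to `c`, so `c` inherits `i ∈ X k`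
      have hc : ∀ k ∈ S, c ∈ X k := by
        intro k hk
        obtain ⟨m, hmk, hma⟩ := (hpair.2 k hk).1
        obtain ⟨r₁, hr₁⟩ := (hconn.2 k hk).exists_walk_of_induce (hi k hk) hmk
        obtain ⟨r₂, hr₂⟩ := hconn.1.exists_walk_of_induce hma hj
        have := hT.isAcyclic.mem_edges_of_adj hic ((r₁.append r₂).append q.reverse)
        simp only [Walk.edges_append, Walk.edges_reverse, List.mem_append,
          List.mem_reverse] at this
        rcases this with (h | h) | h
        · exact hr₁ c (r₁.snd_mem_support_of_mem_edges h)
        · exact absurd (hr₂ i (r₂.fst_mem_support_of_mem_edges h)) hia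
        · exact absurd (q.fst_mem_support_of_mem_edges h) hiq
      exact (hmin q.length (by omega) ⟨c, j, q, hc, hj, rfl⟩).elim

end Trees

def componentWithin (G : SimpleGraph V) (t : Set V) (a : V) : Set V :=
  {z | ∃ p : G.Walk a z, ∀ w ∈ p.support, w ∈ t}

section componentWithin

variable {G : SimpleGraph V} {t : Set V} {a z w : V}

theorem componentWithin_subset : G.componentWithin t a ⊆ t :=
  fun _ ⟨p, hp⟩ => hp _ p.end_mem_support

theorem mem_componentWithin_self (ha : a ∈ t) : a ∈ G.componentWithin t a :=
  ⟨.nil, by simpa using ha⟩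

theorem mem_componentWithin_of_adj (hz : z ∈ G.componentWithin t a) (hw : w ∈ t)
    (h : G.Adj z w) : w ∈ G.componentWithin t a := by
  obtain ⟨p, hp⟩ := hz
  refine ⟨p.concat h, fun x hx => ?_⟩
  rw [Walk.support_concat, List.mem_append, List.mem_singleton] at hx
  exact hx.elim (hp x) (· ▸ hw)

theorem exists_walk_of_mem_componentWithin (hz : z ∈ G.componentWithin t a)
    (hw : w ∈ G.componentWithin t a) : ∃ p : G.Walk z w, ∀ x ∈ p.support, x ∈ t := by
  obtain ⟨p, hp⟩ := hz
  obtain ⟨q, hq⟩ := hw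
  refine ⟨p.reverse.append q, fun x hx => ?_⟩
  rw [Walk.mem_support_append_iff, Walk.support_reverse, List.mem_reverse] at hx
  exact hx.elim (hp x) (hq x)

end componentWithin

end SimpleGraph

section Chordal

variable {V : Type} {G : SimpleGraph V}

/-- If `x` and `y` were not adjacent, `b` together with a shortest such walk would be a
chordless cycle of length at least four. -/
theorem Chordal.adj_of_walk_outside_neighborSet (hG : Chordal G) {b x y : V}
    (hbx : G.Adj b x) (hby : G.Adj b y) (hxy : x ≠ y) (p : G.Walk x y)
    (hp : ∀ z ∈ p.support, z = x ∨ z = y ∨ z ≠ b ∧ ¬ G.Adj b z) : G.Adj x y := by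
  by_contra hnadj
  obtain ⟨q, hqpath, hqchord, hqout⟩ := exists_isPath_isChordless_of_walk
    (P := {z | z = x ∨ z = y ∨ z ≠ b ∧ ¬ G.Adj b z}) p hp
  have hbq : b ∉ q.support := fun hb => by
    rcases hqout b hb with h | h | h
    exacts [hbx.ne h, hby.ne h, h.1 rfl]
  have hq : 2 ≤ q.length := by
    by_contra! h
    interval_cases hlen : q.length
    exacts [hxy (Walk.eq_of_length_eq_zero hlen), hnadj (Walk.adj_of_length_eq_one hlen)]
  set c := Walk.cons hbx (q.concat hby.symm)
  have hc : c.IsCycle := by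
    refine (Walk.cons_isCycle_iff _ hbx).mpr ⟨hqpath.concat hbq _, ?_⟩
    rw [Walk.edges_concat, List.concat_eq_append, List.mem_append, List.mem_singleton, Sym2.eq_iff]
    rintro (h | ⟨rfl, rfl⟩ | ⟨-, rfl⟩)
    exacts [hbq (q.fst_mem_support_of_mem_edges h), hbx.ne rfl, hxy rfl]
  have hcsupp : ∀ z ∈ c.support, z = b ∨ z ∈ q.support := by
    simp only [c, Walk.support_cons, Walk.support_concat, List.mem_cons, List.mem_append]
    tauto
  have hcedges : ∀ e ∈ q.edges, e ∈ c.edges := by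
    simp only [c, Walk.edges_cons, Walk.edges_concat, List.concat_eq_append, List.mem_cons,
      List.mem_append]
    tauto
  have hbchord : ∀ w ∈ q.support, G.Adj b w → s(b, w) ∈ c.edges := by
    intro w hw hbw
    rcases hqout w hw with rfl | rfl | h
    · simp [c]
    · simp [c, Walk.edges_concat, Sym2.eq_swap]
    · exact absurd hbw h.2
  obtain ⟨u, w, hu, hw, huw, hne⟩ := hG b c hc (by simp [c]; omega)
  rcases hcsupp u hu with rfl | hu' <;> rcases hcsupp w hw with rfl | hw'
  · exact G.irrefl huw
  · exact hne (hbchord w hw' huw)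
  · exact hne (Sym2.eq_swap ▸ hbchord u hu' huw.symm)
  · exact hne (hcedges _ (hqchord.mem_edges hu' hw' huw))

theorem Chordal.isClique_setOf_adj_componentWithin (hG : Chordal G) {t : Set V} {a b : V}
    (ht : ∀ z ∈ t, z ≠ b ∧ ¬ G.Adj b z) :
    G.IsClique {x | G.Adj b x ∧ ∃ z ∈ G.componentWithin t a, G.Adj z x} := by
  rintro x ⟨hbx, z₁, hz₁, hxz₁⟩ y ⟨hby, z₂, hz₂, hyz₂⟩ hxy
  obtain ⟨r, hr⟩ := exists_walk_of_mem_componentWithin hz₁ hz₂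
  refine hG.adj_of_walk_outside_neighborSet hbx hby hxy (Walk.cons hxz₁.symm (r.concat hyz₂))
    fun z hz => ?_
  simp only [Walk.support_cons, Walk.support_concat, List.mem_cons, List.mem_append,
    List.mem_nil_iff, or_false] at hz
  rcases hz with rfl | hz | rfl
  exacts [Or.inl rfl, Or.inr (Or.inr (ht z (hr z hz))), Or.inr (Or.inl rfl)]

structure IsCliqueSeparation (G : SimpleGraph V) (s s₁ s₂ : Set V) : Prop where
  union_eq : s₁ ∪ s₂ = s
  left_ssubset : s₁ ⊂ s
  right_ssubset : s₂ ⊂ s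
  isClique_inter : G.IsClique (s₁ ∩ s₂)
  not_adj : ∀ u ∈ s₁ \ s₂, ∀ w ∈ s₂ \ s₁, ¬ G.Adj u w

theorem Chordal.exists_isCliqueSeparation (hG : Chordal G) {s : Set V}
    (hs : ¬ G.IsClique s) : ∃ s₁ s₂, IsCliqueSeparation G s s₁ s₂ := by
  obtain ⟨a, ha, b, hb, hab, hnadj⟩ : ∃ a ∈ s, ∃ b ∈ s, a ≠ b ∧ ¬ G.Adj a b := by
    simpa [IsClique, Set.Pairwise] using hs
  set t := {z ∈ s | z ≠ b ∧ ¬ G.Adj b z}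
  set A := G.componentWithin t a
  set S := {x ∈ s | G.Adj b x ∧ ∃ z ∈ A, G.Adj z x}
  have hAt : A ⊆ t := componentWithin_subset
  have hbS : b ∉ S := fun h => G.irrefl h.2.1
  have hAS : ∀ x ∈ S, x ∉ A := fun x hx hxA => (hAt hxA).2.2 hx.2.1
  have hclosed : ∀ u ∈ A, ∀ w ∈ s, G.Adj u w → w ∈ A ∨ w ∈ S := by
    intro u hu w hw huw
    by_cases hbw : G.Adj b w
    · exact Or.inr ⟨hw, hbw, u, hu, huw⟩
    · refine Or.inl (mem_componentWithin_of_adj hu ⟨hw, ?_, hbw⟩ huw)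
      rintro rfl
      exact (hAt hu).2.2 huw.symm
  have hSclique : G.IsClique S :=
    (hG.isClique_setOf_adj_componentWithin fun z hz => hz.2).subset fun x hx => hx.2
  have hAs : A ⊆ s := fun z hz => (hAt hz).1
  refine ⟨A ∪ S, s \ A, ⟨?_, ?_, ?_, ?_, ?_⟩⟩
  · exact union_sdiff_cancel' subset_union_left (union_subset hAs fun x hx => hx.1)
  · refine ssubset_of_subset_of_ne (union_subset hAs fun x hx => hx.1) fun h => ?_
    rcases (h ▸ hb : b ∈ A ∪ S) with hbA | hbS'
    exacts [(hAt hbA).2.1 rfl, hbS hbS']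
  · exact sdiff_ssubset_left_iff.mpr
      ⟨a, ha, mem_componentWithin_self ⟨ha, hab, fun h => hnadj h.symm⟩⟩
  · refine hSclique.subset ?_
    rintro x ⟨hxA | hxS, -, hxA'⟩
    exacts [absurd hxA hxA', hxS]
  · rintro u ⟨hu | hu, hu'⟩ w ⟨⟨hw, hwA⟩, hw'⟩ huw
    · exact (hclosed u hu w hw huw).elim hwA fun hwS => hw' (Or.inr hwS)
    · exact hu' ⟨hu.1, hAS u hu⟩

end Chordal

section TreeDecomposition

variable {V ι ι₁ ι₂ : Type} {G : SimpleGraph V}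

structure IsTreeDecompOn (G : SimpleGraph V) (s : Set V) (T : SimpleGraph ι)
    (bag : ι → Set V) : Prop where
  isTree : T.IsTree
  bag_subset : ∀ i, bag i ⊆ s
  exists_mem_bag : ∀ v ∈ s, ∃ i, v ∈ bag i
  exists_mem_bag_of_adj : ∀ u ∈ s, ∀ v ∈ s, G.Adj u v → ∃ i, u ∈ bag i ∧ v ∈ bag i
  induce_connected : ∀ v ∈ s, (T.induce {i | v ∈ bag i}).Connected

theorem isTreeDecompOn_univ_iff {T : SimpleGraph ι} {bag : ι → Set V} :
    IsTreeDecompOn G univ T bag ↔ IsTreeDecomposition G T bag := by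
  refine ⟨fun h => ⟨h.isTree, fun v => h.exists_mem_bag v trivial,
    fun u v => h.exists_mem_bag_of_adj u trivial v trivial, fun v => h.induce_connected v trivial⟩,
    fun ⟨hT, hmem, hadj, hconn⟩ => ⟨hT, fun _ => subset_univ _, fun v _ => hmem v,
    fun u _ v _ => hadj u v, fun v _ => hconn v⟩⟩

theorem IsTreeDecompOn.exists_subset_bag_of_isClique {s : Set V} {T : SimpleGraph ι}
    {bag : ι → Set V} (h : IsTreeDecompOn G s T bag) {K : Set V} (hK : G.IsClique K)
    (hKs : K ⊆ s) (hfin : K.Finite) : ∃ i, K ⊆ bag i := by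
  obtain ⟨i, hi⟩ := h.isTree.exists_forall_mem_of_pairwise_inter_nonempty hfin.toFinset
    (fun v => {i | v ∈ bag i}) (fun v hv => h.induce_connected v (hKs (by simpa using hv)))
    (by
      simp only [Finite.mem_toFinset]
      intro u hu v hv
      rcases eq_or_ne u v with rfl | huv
      · obtain ⟨i, hi⟩ := h.exists_mem_bag u (hKs hu)
        exact ⟨i, hi, hi⟩
      · exact h.exists_mem_bag_of_adj u (hKs hu) v (hKs hv) (hK hu hv huv))
  exact ⟨i, fun v hv => hi v (by simpa using hv)⟩

theorem isTreeDecompOn_unit (G : SimpleGraph V) (s : Set V) :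
    IsTreeDecompOn G s (⊥ : SimpleGraph Unit) fun _ => s where
  isTree := .of_subsingleton
  bag_subset _ := subset_rfl
  exists_mem_bag _ hv := ⟨(), hv⟩
  exists_mem_bag_of_adj _ hu _ hv _ := ⟨(), hu, hv⟩
  induce_connected v hv :=
    have : Nonempty {_i : Unit | v ∈ s} := ⟨⟨(), hv⟩⟩
    IsTree.of_subsingleton.connected

theorem IsTreeDecompOn.sum_sup_edge [Finite ι₁] [Finite ι₂] {s₁ s₂ : Set V}
    {T₁ : SimpleGraph ι₁} {T₂ : SimpleGraph ι₂} {bag₁ : ι₁ → Set V} {bag₂ : ι₂ → Set V}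
    (h₁ : IsTreeDecompOn G s₁ T₁ bag₁) (h₂ : IsTreeDecompOn G s₂ T₂ bag₂) {i₁ : ι₁} {i₂ : ι₂}
    (hi₁ : s₁ ∩ s₂ ⊆ bag₁ i₁) (hi₂ : s₁ ∩ s₂ ⊆ bag₂ i₂)
    (hsep : ∀ u ∈ s₁ \ s₂, ∀ w ∈ s₂ \ s₁, ¬ G.Adj u w) :
    IsTreeDecompOn G (s₁ ∪ s₂) ((T₁ ⊕g T₂) ⊔ edge (Sum.inl i₁) (Sum.inr i₂))
      (Sum.elim bag₁ bag₂) where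
  isTree := h₁.isTree.sum_sup_edge h₂.isTree i₁ i₂
  bag_subset := by
    rintro (i | i)
    exacts [(h₁.bag_subset i).trans subset_union_left, (h₂.bag_subset i).trans subset_union_right]
  exists_mem_bag v hv := by
    rcases hv with hv | hv
    · obtain ⟨i, hi⟩ := h₁.exists_mem_bag v hv
      exact ⟨.inl i, hi⟩
    · obtain ⟨i, hi⟩ := h₂.exists_mem_bag v hv
      exact ⟨.inr i, hi⟩
  exists_mem_bag_of_adj u hu w hw huw := by
    have : (u ∈ s₁ ∧ w ∈ s₁) ∨ (u ∈ s₂ ∧ w ∈ s₂) := by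
      have huw' := fun hu hw => hsep u hu w hw huw
      have hwu' := fun hw hu => hsep w hw u hu huw.symm
      simp only [mem_union, mem_sdiff] at hu hw huw' hwu'
      tauto
    rcases this with ⟨hu, hw⟩ | ⟨hu, hw⟩
    · obtain ⟨i, hi⟩ := h₁.exists_mem_bag_of_adj u hu w hw huw
      exact ⟨.inl i, hi⟩
    · obtain ⟨i, hi⟩ := h₂.exists_mem_bag_of_adj u hu w hw huw
      exact ⟨.inr i, hi⟩
  induce_connected v hv := by
    have hset : {k | v ∈ Sum.elim bag₁ bag₂ k} =
        Sum.inl '' {i | v ∈ bag₁ i} ∪ Sum.inr '' {i | v ∈ bag₂ i} := by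
      ext (k | k) <;> simp
    have hempty : ∀ {ι' : Type} {s' : Set V} {bag : ι' → Set V}, (∀ i, bag i ⊆ s') → v ∉ s' →
        {i | v ∈ bag i} = ∅ := fun hbag hv' => eq_empty_of_forall_notMem fun i hi => hv' (hbag i hi)
    let f₁ : T₁ →g (T₁ ⊕g T₂) ⊔ edge (Sum.inl i₁) (Sum.inr i₂) :=
      (Hom.ofLE le_sup_left).comp Embedding.sumInl.toHom
    let f₂ : T₂ →g (T₁ ⊕g T₂) ⊔ edge (Sum.inl i₁) (Sum.inr i₂) :=
      (Hom.ofLE le_sup_left).comp Embedding.sumInr.toHom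
    rw [hset]
    by_cases hv₁ : v ∈ s₁ <;> by_cases hv₂ : v ∈ s₂
    · exact connected_induce_union ((h₁.induce_connected v hv₁).induce_image f₁).preconnected
        ((h₂.induce_connected v hv₂).induce_image f₂).preconnected
        (mem_image_of_mem _ (hi₁ ⟨hv₁, hv₂⟩)) (mem_image_of_mem _ (hi₂ ⟨hv₁, hv₂⟩))
        (by simp [edge])
    · rw [hempty h₂.bag_subset hv₂, image_empty, union_empty]
      exact (h₁.induce_connected v hv₁).induce_image f₁
    · rw [hempty h₁.bag_subset hv₁, image_empty, empty_union]
      exact (h₂.induce_connected v hv₂).induce_image f₂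
    · exact absurd hv (by simp [hv₁, hv₂])

theorem Chordal.exists_isTreeDecompOn_isClique [Finite V] (hG : Chordal G) (s : Set V) :
    ∃ (ι : Type) (_ : Finite ι) (T : SimpleGraph ι) (bag : ι → Set V),
      IsTreeDecompOn G s T bag ∧ ∀ i, G.IsClique (bag i) := by
  induction hn : s.ncard using Nat.strong_induction_on generalizing s with
  | _ n ih =>
  by_cases hs : G.IsClique s
  · exact ⟨Unit, inferInstance, ⊥, fun _ => s, isTreeDecompOn_unit G s, fun _ => hs⟩
  obtain ⟨s₁, s₂, hsep⟩ := hG.exists_isCliqueSeparation hs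
  obtain ⟨ι₁, _, T₁, bag₁, h₁, hclique₁⟩ := ih _ (hn ▸ ncard_lt_ncard hsep.left_ssubset) s₁ rfl
  obtain ⟨ι₂, _, T₂, bag₂, h₂, hclique₂⟩ := ih _ (hn ▸ ncard_lt_ncard hsep.right_ssubset) s₂ rfl
  obtain ⟨i₁, hi₁⟩ := h₁.exists_subset_bag_of_isClique hsep.isClique_inter inter_subset_left
    (toFinite _)
  obtain ⟨i₂, hi₂⟩ := h₂.exists_subset_bag_of_isClique hsep.isClique_inter inter_subset_right
    (toFinite _)
  refine ⟨ι₁ ⊕ ι₂, inferInstance, _, _, hsep.union_eq ▸ h₁.sum_sup_edge h₂ hi₁ hi₂ hsep.not_adj, ?_⟩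
  rintro (i | i)
  exacts [hclique₁ i, hclique₂ i]

end TreeDecomposition

section CliqueNumber

variable {V : Type} [Finite V] {G : SimpleGraph V}

theorem bddAbove_ncard_isClique (G : SimpleGraph V) :
    BddAbove {n | ∃ S : Set V, G.IsClique S ∧ S.ncard = n} :=
  bddAbove_def.mpr ⟨Nat.card V, by rintro _ ⟨S, -, rfl⟩; exact ncard_le_card S⟩

theorem ncard_le_cliqueNumber {K : Set V} (hK : G.IsClique K) : K.ncard ≤ cliqueNumber G :=
  le_csSup (bddAbove_ncard_isClique G) ⟨K, hK, rfl⟩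

theorem exists_isClique_ncard_eq_cliqueNumber (G : SimpleGraph V) :
    ∃ K : Set V, G.IsClique K ∧ K.ncard = cliqueNumber G :=
  Nat.sSup_mem (s := {n | ∃ S : Set V, G.IsClique S ∧ S.ncard = n})
    ⟨0, ∅, isClique_empty, ncard_empty V⟩ (bddAbove_ncard_isClique G)

theorem HasTreeDecompOfWidth.cliqueNumber_le {k : ℕ} (h : HasTreeDecompOfWidth G k) :
    cliqueNumber G ≤ k + 1 := by
  obtain ⟨ι, T, bag, hT, hwidth⟩ := h
  obtain ⟨K, hK, hcard⟩ := exists_isClique_ncard_eq_cliqueNumber G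
  obtain ⟨i, hi⟩ := (isTreeDecompOn_univ_iff.mpr hT).exists_subset_bag_of_isClique hK
    (subset_univ K) (toFinite K)
  calc cliqueNumber G = K.ncard := hcard.symm
    _ ≤ (bag i).ncard := ncard_le_ncard hi
    _ ≤ k + 1 := hwidth i

theorem Chordal.hasTreeDecompOfWidth_cliqueNumber_sub_one (hG : Chordal G) :
    HasTreeDecompOfWidth G (cliqueNumber G - 1) := by
  obtain ⟨ι, _, T, bag, hT, hclique⟩ := hG.exists_isTreeDecompOn_isClique univ
  refine ⟨ι, T, bag, isTreeDecompOn_univ_iff.mp hT, fun i => ?_⟩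
  have := ncard_le_cliqueNumber (hclique i)
  omega

end CliqueNumber

section Treewidth

variable {V : Type} {G : SimpleGraph V} {k : ℕ}

theorem treewidth_le (h : HasTreeDecompOfWidth G k) : treewidth G ≤ k :=
  Nat.sInf_le h

theorem HasTreeDecompOfWidth.treewidth (h : HasTreeDecompOfWidth G k) :
    HasTreeDecompOfWidth G (treewidth G) :=
  Nat.sInf_mem (s := {k | HasTreeDecompOfWidth G k}) ⟨k, h⟩

end Treewidth

theorem stmt_16_general {V : Type} [Fintype V] (G : SimpleGraph V)
    (hG : Chordal G) : treewidth G = cliqueNumber G - 1 := by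
  have hdecomp := hG.hasTreeDecompOfWidth_cliqueNumber_sub_one
  have hle := treewidth_le hdecomp
  have hge := hdecomp.treewidth.cliqueNumber_le
  omega

/-- For every nonempty chordal graph `G`, `tw(G) = ω(G) − 1`. -/
theorem stmt_16 {V : Type} [Fintype V] [Nonempty V] (G : SimpleGraph V)
    (hG : Chordal G) : treewidth G = cliqueNumber G - 1 :=
  stmt_16_general G hG
end
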